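/- Let A be a commutative algebra over ℂ, let n ≥ 1 be an integer, F, a ∈ A, and let ζ ∈ ℂ be a primitive n-th root of unity. Let B := A[u, v]/(uv − F, u^n + v^n − 2a), and let σ, τ be the A-algebra automorphisms of B determined by σ(u) = ζ·u, σ(v) = ζ⁻¹·v, τ(u) = v, τ(v) = u. Then the subalgebra of B consisting of elements fixed by both σ and τ equals the image of the structure map A → B. -/
import Mathlib


noncomputable section

/-- The ideal `(uv − F, uⁿ + vⁿ − 2a)` in `A[u, v]`. -/
def dihedralIdeal (A : Type) [CommRing A] (n : ℕ) (F a : A) :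
    Ideal (MvPolynomial (Fin 2) A) :=
  Ideal.span {MvPolynomial.X 0 * MvPolynomial.X 1 - MvPolynomial.C F,
    MvPolynomial.X 0 ^ n + MvPolynomial.X 1 ^ n - MvPolynomial.C (2 * a)}

/-- The ring `B = A[u, v]/(uv − F, uⁿ + vⁿ − 2a)`, the coordinate ring of the simple
dihedral cover of `Spec A` determined by the data `F` and `a`. -/
abbrev DihedralCoverRing (A : Type) [CommRing A] (n : ℕ) (F a : A) : Type :=
  MvPolynomial (Fin 2) A ⧸ dihedralIdeal A n F a

/-- The image `u` of the first variable in `B`. -/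
def uElt (A : Type) [CommRing A] (n : ℕ) (F a : A) : DihedralCoverRing A n F a :=
  Ideal.Quotient.mk _ (MvPolynomial.X 0)

/-- The image `v` of the second variable in `B`. -/
def vElt (A : Type) [CommRing A] (n : ℕ) (F a : A) : DihedralCoverRing A n F a :=
  Ideal.Quotient.mk _ (MvPolynomial.X 1)

/-!
STATEMENT 9: Let `A` be a commutative algebra over `ℂ`, let `n ≥ 1` be an integer,
`F, a ∈ A`, and let `ζ ∈ ℂ` be a primitive `n`-th root of unity.  Let
`B := A[u, v]/(uv − F, uⁿ + vⁿ − 2a)`, and let `σ, τ` be the `A`-algebra automorphisms of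
`B` determined by `σ(u) = ζ·u`, `σ(v) = ζ⁻¹·v`, `τ(u) = v`, `τ(v) = u`.  Then the
subalgebra of `B` consisting of elements fixed by both `σ` and `τ` equals the image of the
structure map `A → B`.
-/

set_option linter.unusedSectionVars false

variable {A : Type} [CommRing A] [Algebra ℂ A] {n : ℕ} {F a : A}

lemma dih_algMap (b : A) : algebraMap A (DihedralCoverRing A n F a) b
    = Ideal.Quotient.mk _ (MvPolynomial.C b) := rfl

lemma dih_uv : uElt A n F a * vElt A n F a = algebraMap A (DihedralCoverRing A n F a) F := by
  rw [dih_algMap, uElt, vElt, ← map_mul, Ideal.Quotient.eq]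
  exact Ideal.subset_span (Set.mem_insert _ _)

lemma dih_sum : uElt A n F a ^ n + vElt A n F a ^ n
    = algebraMap A (DihedralCoverRing A n F a) (2 * a) := by
  rw [dih_algMap, uElt, vElt, ← map_pow, ← map_pow, ← map_add, Ideal.Quotient.eq]
  exact Ideal.subset_span (Set.mem_insert_of_mem _ rfl)

lemma pow_sum_mem {R B : Type*} [CommRing R] [CommRing B] [Algebra R B]
    (s t : B) (h1 : s + t ∈ (⊥ : Subalgebra R B)) (h2 : s * t ∈ (⊥ : Subalgebra R B)) :
    ∀ m : ℕ, s ^ m + t ^ m ∈ (⊥ : Subalgebra R B)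
  | 0 => by simpa using add_mem (one_mem (⊥ : Subalgebra R B)) (one_mem _)
  | 1 => by simpa
  | (m+2) => by
      have h3 := pow_sum_mem s t h1 h2 m
      have h4 := pow_sum_mem s t h1 h2 (m+1)
      have key : s ^ (m+2) + t ^ (m+2)
          = (s+t) * (s^(m+1) + t^(m+1)) - (s*t) * (s^m + t^m) := by ring
      rw [key]
      exact sub_mem (mul_mem h1 h4) (mul_mem h2 h3)

/-- the symmetric monomial sum is in the base when `n ∣ i - j`, case `j ≤ i`. -/
lemma dih_symm_mem_aux (hn : 1 ≤ n) (i j : ℕ) (hj : j ≤ i) (hd : (n:ℤ) ∣ (i:ℤ) - (j:ℤ)) :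
    uElt A n F a ^ i * vElt A n F a ^ j + uElt A n F a ^ j * vElt A n F a ^ i
      ∈ (⊥ : Subalgebra A (DihedralCoverRing A n F a)) := by
  obtain ⟨q, hq⟩ := hd
  have hq0 : 0 ≤ q := by nlinarith [Int.ofNat_le.mpr hj, Int.ofNat_le.mpr hn]
  set m := q.toNat with hm
  have him : i = j + n * m := by
    have : (i:ℤ) = j + n * m := by rw [hm, Int.toNat_of_nonneg hq0]; linarith
    exact_mod_cast this
  set u := uElt A n F a
  set v := vElt A n F a
  have key : u ^ i * v ^ j + u ^ j * v ^ i
      = (u * v) ^ j * ((u ^ n) ^ m + (v ^ n) ^ m) := by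
    rw [him]; ring
  rw [key]
  have h1 : u ^ n + v ^ n ∈ (⊥ : Subalgebra A (DihedralCoverRing A n F a)) := by
    rw [dih_sum]; exact Subalgebra.algebraMap_mem _ _
  have h2 : u ^ n * v ^ n ∈ (⊥ : Subalgebra A (DihedralCoverRing A n F a)) := by
    rw [← mul_pow, dih_uv, ← map_pow]; exact Subalgebra.algebraMap_mem _ _
  exact mul_mem (pow_mem (by rw [dih_uv]; exact Subalgebra.algebraMap_mem _ _) j)
    (pow_sum_mem _ _ h1 h2 m)

lemma dih_symm_mem (hn : 1 ≤ n) (ζ : ℂ) (hζ : IsPrimitiveRoot ζ n) (i j : ℕ)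
    (hx : ζ ^ ((i:ℤ) - (j:ℤ)) = 1) :
    uElt A n F a ^ i * vElt A n F a ^ j + uElt A n F a ^ j * vElt A n F a ^ i
      ∈ (⊥ : Subalgebra A (DihedralCoverRing A n F a)) := by
  have hd : (n:ℤ) ∣ (i:ℤ) - (j:ℤ) := hζ.zpow_eq_one_iff_dvd _ |>.mp hx
  rcases le_total j i with h | h
  · exact dih_symm_mem_aux hn i j h hd
  · rw [add_comm]
    exact dih_symm_mem_aux hn j i h (by rw [show (j:ℤ)-(i:ℤ) = -((i:ℤ)-(j:ℤ)) by ring]; exact dvd_neg.mpr hd)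
lemma dih_span (x : DihedralCoverRing A n F a) :
    x ∈ Submodule.span A {y : DihedralCoverRing A n F a |
      ∃ i j : ℕ, y = uElt A n F a ^ i * vElt A n F a ^ j} := by
  set M : Set (DihedralCoverRing A n F a) :=
    {y | ∃ i j : ℕ, y = uElt A n F a ^ i * vElt A n F a ^ j} with hM
  set S := Submodule.span A M with hS
  have hmulu : ∀ y ∈ S, ∀ w ∈ M, y * w ∈ S := by
    intro y hy w hw
    refine Submodule.span_induction ?_ ?_ ?_ ?_ hy
    · rintro z ⟨i, j, rfl⟩
      obtain ⟨i', j', rfl⟩ := hw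
      refine Submodule.subset_span ⟨i + i', j + j', by ring⟩
    · simp
    · intro z1 z2 _ _ h1 h2; rw [add_mul]; exact add_mem h1 h2
    · intro b z _ h; rw [smul_mul_assoc]; exact Submodule.smul_mem _ _ h
  obtain ⟨p, rfl⟩ := Ideal.Quotient.mk_surjective x
  induction p using MvPolynomial.induction_on with
  | C b =>
      have : (Ideal.Quotient.mk (dihedralIdeal A n F a)) (MvPolynomial.C b)
          = b • (uElt A n F a ^ 0 * vElt A n F a ^ 0) := by
        rw [pow_zero, pow_zero, mul_one]
        have h2 := map_smul (Ideal.Quotient.mkₐ A (dihedralIdeal A n F a)) b 1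
        rw [map_one] at h2
        rw [← h2, Ideal.Quotient.mkₐ_eq_mk]
        congr 1
        rw [MvPolynomial.smul_eq_C_mul, mul_one]
      rw [this]
      exact Submodule.smul_mem _ _ (Submodule.subset_span ⟨0, 0, rfl⟩)
  | add p q hp hq => rw [map_add]; exact add_mem hp hq
  | mul_X p i hp =>
      rw [map_mul]
      fin_cases i
      · exact hmulu _ hp _ ⟨1, 0, by simp [uElt]⟩
      · exact hmulu _ hp _ ⟨0, 1, by simp [vElt]⟩
set_option maxHeartbeats 1000000 in
theorem dihedralCoverRing_invariants_eq_base
    (A : Type) [CommRing A] [Algebra ℂ A] (n : ℕ) (hn : 1 ≤ n) (F a : A)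
    (ζ : ℂ) (hζ : IsPrimitiveRoot ζ n)
    (σ τ : DihedralCoverRing A n F a ≃ₐ[A] DihedralCoverRing A n F a)
    (hσu : σ (uElt A n F a) =
      algebraMap ℂ (DihedralCoverRing A n F a) ζ * uElt A n F a)
    (hσv : σ (vElt A n F a) =
      algebraMap ℂ (DihedralCoverRing A n F a) ζ⁻¹ * vElt A n F a)
    (hτu : τ (uElt A n F a) = vElt A n F a)
    (hτv : τ (vElt A n F a) = uElt A n F a) :
    {x : DihedralCoverRing A n F a | σ x = x ∧ τ x = x} =
      Set.range (algebraMap A (DihedralCoverRing A n F a)) := by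
  classical
  set B := DihedralCoverRing A n F a with hB
  set u := uElt A n F a
  set v := vElt A n F a
  set c : ℂ →+* B := (algebraMap ℂ B) with hcdef
  have hc : ∀ z : ℂ, c z = algebraMap A B (algebraMap ℂ A z) := fun z =>
    IsScalarTower.algebraMap_apply ℂ A B z
  have cmem : ∀ z : ℂ, c z ∈ (⊥ : Subalgebra A B) := fun z => by
    rw [hc]; exact Subalgebra.algebraMap_mem _ _
  have hζ0 : ζ ≠ 0 := hζ.ne_zero (by omega)
  have hτc : ∀ z : ℂ, τ (c z) = c z := fun z => by rw [hc]; exact τ.commutes _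
  -- powers of σ on u and v
  have hku : ∀ k : ℕ, (σ ^ k) u = c (ζ ^ k) * u := by
    intro k; induction k with
    | zero => simp
    | succ k ih =>
        rw [pow_succ, AlgEquiv.mul_apply, hσu, map_mul, ih]
        rw [hc ζ, AlgEquiv.commutes, ← hc ζ, ← mul_assoc, ← map_mul, ← pow_succ']
  have hkv : ∀ k : ℕ, (σ ^ k) v = c (ζ⁻¹ ^ k) * v := by
    intro k; induction k with
    | zero => simp
    | succ k ih =>
        rw [pow_succ, AlgEquiv.mul_apply, hσv, map_mul, ih]
        rw [hc ζ⁻¹, AlgEquiv.commutes, ← hc ζ⁻¹, ← mul_assoc, ← map_mul, ← pow_succ']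
  -- averaging operator
  set Sf : B → B := fun y => ∑ k ∈ Finset.range n, ((σ ^ k) y + τ ((σ ^ k) y)) with hSf
  have hπmem : ∀ y : B, c ((2 * (n:ℂ))⁻¹) * Sf y ∈ (⊥ : Subalgebra A B) := by
    intro y
    refine Submodule.span_induction ?_ ?_ ?_ ?_ (dih_span y)
    · rintro z ⟨i, j, rfl⟩
      set d : ℤ := (i:ℤ) - (j:ℤ) with hd
      set x0 : ℂ := ζ ^ d with hx0
      have hzk : ∀ k : ℕ, (ζ ^ k) ^ i * (ζ⁻¹ ^ k) ^ j = x0 ^ k := by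
        intro k
        have l1 : (ζ ^ k) ^ i = ζ ^ ((k * i : ℕ) : ℤ) := by
          rw [← pow_mul, zpow_natCast]
        have l2 : (ζ⁻¹ ^ k) ^ j = ζ ^ (-((k * j : ℕ) : ℤ)) := by
          rw [← pow_mul, inv_pow, ← zpow_natCast, ← zpow_neg]
        have l3 : x0 ^ k = ζ ^ (d * k) := by rw [hx0, ← zpow_natCast (ζ ^ d) k, ← zpow_mul]
        rw [l1, l2, l3, ← zpow_add₀ hζ0]
        congr 1; rw [hd]; push_cast; ring
      have hpow : ∀ k : ℕ, (σ ^ k) (u ^ i * v ^ j) = c (x0 ^ k) * (u ^ i * v ^ j) := by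
        intro k
        rw [map_mul, map_pow, map_pow, hku k, hkv k, mul_pow, mul_pow,
          ← map_pow c, ← map_pow c,
          show c ((ζ ^ k) ^ i) * u ^ i * (c ((ζ⁻¹ ^ k) ^ j) * v ^ j)
            = c ((ζ ^ k) ^ i) * c ((ζ⁻¹ ^ k) ^ j) * (u ^ i * v ^ j) from by ring,
          ← map_mul, hzk k]
      have hτpow : ∀ k : ℕ, τ ((σ ^ k) (u ^ i * v ^ j))
          = c (x0 ^ k) * (u ^ j * v ^ i) := by
        intro k
        rw [hpow k, map_mul, hτc]
        congr 1
        rw [map_mul, map_pow, map_pow, hτu, hτv]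
        ring
      have hS : Sf (u ^ i * v ^ j)
          = c (∑ k ∈ Finset.range n, x0 ^ k) * (u ^ i * v ^ j + u ^ j * v ^ i) := by
        rw [hSf, map_sum, Finset.sum_mul]
        refine Finset.sum_congr rfl fun k _ => ?_
        rw [hτpow k, hpow k]; ring
      rw [hS]
      by_cases hx1 : x0 = 1
      · have hG : ∑ k ∈ Finset.range n, x0 ^ k = (n : ℂ) := by simp [hx1]
        rw [hG]
        exact mul_mem (cmem _) (mul_mem (cmem _)
          (dih_symm_mem hn ζ hζ i j (by rw [← hx0]; exact hx1)))
      · have hxn : x0 ^ n = 1 := by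
          rw [hx0, ← zpow_natCast (ζ ^ d) n, ← zpow_mul, mul_comm, zpow_mul,
            zpow_natCast, hζ.pow_eq_one, one_zpow]
        have hG : ∑ k ∈ Finset.range n, x0 ^ k = 0 := by
          rw [geom_sum_eq hx1, hxn]; simp
        rw [hG, map_zero, zero_mul, mul_zero]
        exact zero_mem _
    · have h0 : Sf 0 = 0 := by simp [hSf]
      rw [h0, mul_zero]; exact zero_mem _
    · intro y z _ _ hy hz
      have hadd : Sf (y + z) = Sf y + Sf z := by
        simp only [hSf, ← Finset.sum_add_distrib]
        refine Finset.sum_congr rfl fun k _ => ?_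
        rw [map_add, map_add]; ring
      rw [hadd, mul_add]
      exact add_mem hy hz
    · intro b y _ hy
      have hsmul : Sf (b • y) = b • Sf y := by
        simp only [hSf, Finset.smul_sum]
        refine Finset.sum_congr rfl fun k _ => ?_
        rw [map_smul, map_smul, smul_add]
      rw [hsmul, mul_smul_comm]
      exact Subalgebra.smul_mem _ hy _
  ext x
  simp only [Set.mem_setOf_eq]
  constructor
  · rintro ⟨hσx, hτx⟩
    have hfix : ∀ k : ℕ, (σ ^ k) x = x := by
      intro k; induction k with
      | zero => simp
      | succ k ih => rw [pow_succ, AlgEquiv.mul_apply, hσx, ih]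
    have h2n : (2 * (n : ℂ)) ≠ 0 := by
      have : (n : ℂ) ≠ 0 := Nat.cast_ne_zero.mpr (by omega)
      simp [this]
    have hxeq : x = c ((2 * (n:ℂ))⁻¹) * Sf x := by
      have hSx : Sf x = c (2 * (n:ℂ)) * x := by
        rw [hSf]
        simp only [hfix, hτx]
        rw [Finset.sum_const, Finset.card_range, nsmul_eq_mul]
        rw [show ((n : ℕ) : B) = c ((n : ℕ) : ℂ) from (map_natCast c n).symm]
        rw [map_mul, map_ofNat]
        ring
      rw [hSx, ← mul_assoc, ← map_mul, inv_mul_cancel₀ h2n, map_one, one_mul]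
    have := hπmem x
    rw [← hxeq] at this
    exact Algebra.mem_bot.mp this
  · rintro ⟨b, rfl⟩
    exact ⟨σ.commutes b, τ.commutes b⟩
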